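/- arXiv:2003.05364 — 5 statements merged into one kernel-verified Lean document; each statement's English description precedes it below -/
import Mathlib

section
/- A feasible solution x* of the multiobjective fractional problem is efficient if and only if the optimal value of the test program MM(x*) is zero, i.e., there is no feasible y and nonnegative slack vector ψ with (c^i - Z_i(x*) d^i)·y - ψ_i = Z_i(x*) d^i_0 - c^i_0 for all i and Σ_i ψ_i > 0. -/
/-! The equality constraint of `MM(x*)` pins the slack down: `ψ_i = N_i(y) - Z_i(x*) D_i(y)`,
where `Z_i = N_i / D_i`. Since `D_i(y) > 0`, `ψ_i ≥ 0` says `Z_i(y) ≥ Z_i(x*)`, and given that,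
`∑ ψ_i > 0` says that some inequality is strict. So `MM(x*)` has a feasible point of positive
value exactly when some `y ∈ D` dominates `x*`. -/

open Finset

section
variable {ι : Type*} [Fintype ι]

theorem exists_nonneg_slack_iff (L r : ι → ℝ) :
    (∃ ψ : ι → ℝ, (∀ i, 0 ≤ ψ i) ∧ (∀ i, L i - ψ i = r i) ∧ 0 < ∑ i, ψ i) ↔
      (∀ i, 0 ≤ L i - r i) ∧ 0 < ∑ i, (L i - r i) := by
  constructor
  · rintro ⟨ψ, hψ, hL, hpos⟩
    obtain rfl : ψ = fun i => L i - r i := funext fun i => by linarith [hL i]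
    exact ⟨hψ, hpos⟩
  · rintro ⟨hψ, hpos⟩
    exact ⟨_, hψ, fun i => sub_sub_cancel (L i) (r i), hpos⟩

theorem dominates_iff_slack_nonneg_sum_pos (z N M : ι → ℝ) (hM : ∀ i, 0 < M i) :
    ((∀ i, z i ≤ N i / M i) ∧ ∃ j, z j < N j / M j) ↔
      (∀ i, 0 ≤ N i - z i * M i) ∧ 0 < ∑ i, (N i - z i * M i) := by
  have hle (i : ι) : z i ≤ N i / M i ↔ 0 ≤ N i - z i * M i := by
    rw [le_div_iff₀ (hM i), sub_nonneg]
  have hlt (i : ι) : z i < N i / M i ↔ 0 < N i - z i * M i := by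
    rw [lt_div_iff₀ (hM i), sub_pos]
  simp only [hle, hlt]
  refine and_congr_right fun hnonneg => ?_
  rw [sum_pos_iff_of_nonneg fun i _ => hnonneg i]
  simp only [mem_univ, true_and]

theorem sum_sub_mul_sub_eq {κ : Type*} [Fintype κ] (c d y : κ → ℝ) (c0 d0 z : ℝ) :
    ∑ j, (c j - z * d j) * y j - (z * d0 - c0) =
      (∑ j, c j * y j + c0) - z * (∑ j, d j * y j + d0) := by
  simp only [sub_mul, sum_sub_distrib, mul_add, mul_sum, mul_assoc]
  ring

end

theorem efficiency_test_MM_general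
    (n k : ℕ) (c d : Fin k → Fin n → ℝ) (c0 d0 : Fin k → ℝ)
    (D : Set (Fin n → ℤ))
    (hden : ∀ x ∈ D, ∀ i : Fin k, 0 < (∑ j, d i j * (x j : ℝ)) + d0 i)
    (Z : Fin k → (Fin n → ℤ) → ℝ)
    (hZ : ∀ i x, Z i x = ((∑ j, c i j * (x j : ℝ)) + c0 i) /
      ((∑ j, d i j * (x j : ℝ)) + d0 i))
    (xstar : Fin n → ℤ) :
    (¬ ∃ y ∈ D, (∀ i, Z i xstar ≤ Z i y) ∧ ∃ j, Z j xstar < Z j y) ↔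
    ¬ ∃ y ∈ D, ∃ ψ : Fin k → ℝ, (∀ i, 0 ≤ ψ i) ∧
      (∀ i, (∑ j, (c i j - Z i xstar * d i j) * (y j : ℝ)) - ψ i
          = Z i xstar * d0 i - c0 i) ∧
      0 < ∑ i, ψ i := by
  refine not_congr (exists_congr fun y => and_congr_right fun hy => ?_)
  rw [exists_nonneg_slack_iff]
  simp only [hZ _ y, sum_sub_mul_sub_eq]
  exact dominates_iff_slack_nonneg_sum_pos _ _ _ (hden y hy)

/-- Efficiency test for multiobjective fractional programs:
`x*` is efficient iff the optimal value of `MM(x*)` is zero, i.e. there is no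
feasible `(y, ψ)` with `∑ ψ i > 0`. -/
theorem efficiency_test_MM
    (n k : ℕ) (c d : Fin k → Fin n → ℝ) (c0 d0 : Fin k → ℝ)
    (D : Set (Fin n → ℤ)) (hDfin : D.Finite) (hDne : D.Nonempty)
    (hden : ∀ x ∈ D, ∀ i : Fin k, 0 < (∑ j, d i j * (x j : ℝ)) + d0 i)
    (Z : Fin k → (Fin n → ℤ) → ℝ)
    (hZ : ∀ i x, Z i x = ((∑ j, c i j * (x j : ℝ)) + c0 i) /
      ((∑ j, d i j * (x j : ℝ)) + d0 i))
    (xstar : Fin n → ℤ) (hx : xstar ∈ D) :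
    (¬ ∃ y ∈ D, (∀ i, Z i xstar ≤ Z i y) ∧ ∃ j, Z j xstar < Z j y) ↔
    ¬ ∃ y ∈ D, ∃ ψ : Fin k → ℝ, (∀ i, 0 ≤ ψ i) ∧
      (∀ i, (∑ j, (c i j - Z i xstar * d i j) * (y j : ℝ)) - ψ i
          = Z i xstar * d0 i - c0 i) ∧
      0 < ∑ i, ψ i :=
  efficiency_test_MM_general n k c d c0 d0 D hden Z hZ xstar
end

section
/- If the optimal value of the test program MM(x*) is zero, then every optimal solution (y, ψ) satisfies Z_i(y) = Z_i(x*) for all i = 1,…,k. -/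
theorem div_eq_of_sum_sub_mul_mul_eq {ι : Type*} [Fintype ι] (c d y : ι → ℝ) (c0 d0 z : ℝ)
    (hden : (∑ j, d j * y j) + d0 ≠ 0)
    (h : ∑ j, (c j - z * d j) * y j = z * d0 - c0) :
    ((∑ j, c j * y j) + c0) / ((∑ j, d j * y j) + d0) = z := by
  have hsplit : ∑ j, (c j - z * d j) * y j = (∑ j, c j * y j) - z * ∑ j, d j * y j := by
    simp only [sub_mul, Finset.sum_sub_distrib, Finset.mul_sum, mul_assoc]
  rw [div_eq_iff hden]
  linarith

theorem MM_optimal_value_zero_criteria_equal_general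
    (n k : ℕ) (c d : Fin k → Fin n → ℝ) (c0 d0 : Fin k → ℝ)
    (D : Set (Fin n → ℤ))
    (hden : ∀ x ∈ D, ∀ i : Fin k, 0 < (∑ j, d i j * (x j : ℝ)) + d0 i)
    (Z : Fin k → (Fin n → ℤ) → ℝ)
    (hZ : ∀ i x, Z i x = ((∑ j, c i j * (x j : ℝ)) + c0 i) /
      ((∑ j, d i j * (x j : ℝ)) + d0 i))
    (xstar : Fin n → ℤ) :
    ∀ y ∈ D, ∀ ψ : Fin k → ℝ, (∀ i, 0 ≤ ψ i) →
      (∀ i, (∑ j, (c i j - Z i xstar * d i j) * (y j : ℝ)) - ψ i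
          = Z i xstar * d0 i - c0 i) →
      ∑ i, ψ i = 0 → ∀ i, Z i y = Z i xstar := by
  intro y hy ψ hψ hfeas hsum i
  have hψi : ψ i = 0 :=
    (Finset.sum_eq_zero_iff_of_nonneg fun j _ => hψ j).mp hsum i (Finset.mem_univ i)
  rw [hZ]
  exact div_eq_of_sum_sub_mul_mul_eq _ _ _ _ _ _ (hden y hy i).ne'
    (by simpa [hψi] using hfeas i)

/-- If the optimal value of the test program `MM(x*)` is zero,
then every optimal solution `(y, ψ)` of `MM(x*)` satisfies `Z_i(y) = Z_i(x*)`
for all `i`. -/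
theorem MM_optimal_value_zero_criteria_equal
    (n k : ℕ) (c d : Fin k → Fin n → ℝ) (c0 d0 : Fin k → ℝ)
    (D : Set (Fin n → ℤ)) (hDfin : D.Finite) (hDne : D.Nonempty)
    (hden : ∀ x ∈ D, ∀ i : Fin k, 0 < (∑ j, d i j * (x j : ℝ)) + d0 i)
    (Z : Fin k → (Fin n → ℤ) → ℝ)
    (hZ : ∀ i x, Z i x = ((∑ j, c i j * (x j : ℝ)) + c0 i) /
      ((∑ j, d i j * (x j : ℝ)) + d0 i))
    (xstar : Fin n → ℤ) (hx : xstar ∈ D)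
    -- the optimal value of MM(x*) is zero:
    (hopt : ∀ y ∈ D, ∀ ψ : Fin k → ℝ, (∀ i, 0 ≤ ψ i) →
      (∀ i, (∑ j, (c i j - Z i xstar * d i j) * (y j : ℝ)) - ψ i
          = Z i xstar * d0 i - c0 i) → ∑ i, ψ i ≤ 0) :
    ∀ y ∈ D, ∀ ψ : Fin k → ℝ, (∀ i, 0 ≤ ψ i) →
      (∀ i, (∑ j, (c i j - Z i xstar * d i j) * (y j : ℝ)) - ψ i
          = Z i xstar * d0 i - c0 i) →
      ∑ i, ψ i = 0 → ∀ i, Z i y = Z i xstar :=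
  MM_optimal_value_zero_criteria_equal_general n k c d c0 d0 D hden Z hZ xstar
end

section
/- Let x* be a point and suppose for every index i ∈ {1,…,k} the 'reduced gradient' quantity λ^i := z²_i(x*)·(z¹_i(x) - z¹_i(x*)) - z¹_i(x*)·(z²_i(x) - z²_i(x*)) satisfies λ^i ≤ 0, with strict inequality for at least one i₀. Then the criterion vector (Z_1(x),…,Z_k(x)) is dominated by (Z_1(x*),…,Z_k(x*)), i.e., Z_i(x) ≤ Z_i(x*) for all i and Z_{i₀}(x) < Z_{i₀}(x*). -/
section ReducedGradient

variable {α : Type*} [Field α] [LinearOrder α] [IsStrictOrderedRing α] {a b a' b' : α}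

/-- The reduced gradient `b' (a - a') - a' (b - b')` equals `a b' - a' b`, the numerator of
`a / b - a' / b'` over the positive denominator `b b'`. -/
theorem div_le_div_of_reducedGradient_nonpos (hb : 0 < b) (hb' : 0 < b')
    (h : b' * (a - a') - a' * (b - b') ≤ 0) : a / b ≤ a' / b' := by
  rw [div_le_div_iff₀ hb hb']
  linarith

theorem div_lt_div_of_reducedGradient_neg (hb : 0 < b) (hb' : 0 < b')
    (h : b' * (a - a') - a' * (b - b') < 0) : a / b < a' / b' := by
  rw [div_lt_div_iff₀ hb hb']
  linarith

end ReducedGradient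

theorem reduced_gradient_domination_general
    (n k : ℕ)
    (z1 z2 : Fin k → (Fin n → ℝ) → ℝ) (Z : Fin k → (Fin n → ℝ) → ℝ)
    (hZ : ∀ i x, Z i x = z1 i x / z2 i x)
    (x xstar : Fin n → ℝ)
    (hpos : ∀ i, 0 < z2 i x) (hposs : ∀ i, 0 < z2 i xstar)
    (i0 : Fin k)
    (hle : ∀ i, z2 i xstar * (z1 i x - z1 i xstar)
      - z1 i xstar * (z2 i x - z2 i xstar) ≤ 0)
    (hlt : z2 i0 xstar * (z1 i0 x - z1 i0 xstar)
      - z1 i0 xstar * (z2 i0 x - z2 i0 xstar) < 0) :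
    (∀ i, Z i x ≤ Z i xstar) ∧ Z i0 x < Z i0 xstar := by
  simp only [hZ]
  exact ⟨fun i => div_le_div_of_reducedGradient_nonpos (hpos i) (hposs i) (hle i),
    div_lt_div_of_reducedGradient_neg (hpos i0) (hposs i0) hlt⟩

/-- If for every criterion `i` the reduced-gradient quantity
`λ^i = z²_i(x*)(z¹_i(x) - z¹_i(x*)) - z¹_i(x*)(z²_i(x) - z²_i(x*))` is `≤ 0`,
with strict inequality for some `i₀`, then the criterion vector of `x` is
dominated by that of `x*`. -/
theorem reduced_gradient_domination
    (n k : ℕ) (c d : Fin k → Fin n → ℝ) (c0 d0 : Fin k → ℝ)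
    (z1 z2 : Fin k → (Fin n → ℝ) → ℝ) (Z : Fin k → (Fin n → ℝ) → ℝ)
    (hz1 : ∀ i x, z1 i x = (∑ j, c i j * x j) + c0 i)
    (hz2 : ∀ i x, z2 i x = (∑ j, d i j * x j) + d0 i)
    (hZ : ∀ i x, Z i x = z1 i x / z2 i x)
    (x xstar : Fin n → ℝ)
    (hpos : ∀ i, 0 < z2 i x) (hposs : ∀ i, 0 < z2 i xstar)
    (i0 : Fin k)
    (hle : ∀ i, z2 i xstar * (z1 i x - z1 i xstar)
      - z1 i xstar * (z2 i x - z2 i xstar) ≤ 0)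
    (hlt : z2 i0 xstar * (z1 i0 x - z1 i0 xstar)
      - z1 i0 xstar * (z2 i0 x - z2 i0 xstar) < 0) :
    (∀ i, Z i x ≤ Z i xstar) ∧ Z i0 x < Z i0 xstar :=
  reduced_gradient_domination_general n k z1 z2 Z hZ x xstar hpos hposs i0 hle hlt
end

section
/- Suppose x* maximizes f₁ over a set X_l, and for a point x ∈ X_l the quantity γ² := Q²(x*)(P²(x) - P²(x*)) - P²(x*)(Q²(x) - Q²(x*)) satisfies γ² ≤ 0. Then f₂(x) ≤ f₂(x*) and f₁(x) ≤ f₁(x*), so x* weakly dominates x with respect to the biobjective problem (f₁, f₂). -/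
/-! Only the bound on `f₂` needs an argument: since both denominators are positive, clearing them
turns `f₂(x) ≤ f₂(x*)` into `P²(x) Q²(x*) ≤ P²(x*) Q²(x)`, and `γ²` is exactly the difference of
the two sides. The bound on `f₁` is the maximality of `x*`. -/

theorem div_le_div_of_cross_sub_nonpos {a b c d : ℝ} (hb : 0 < b) (hd : 0 < d)
    (h : b * (c - a) - a * (d - b) ≤ 0) : c / d ≤ a / b := by
  rw [div_le_div_iff₀ hd hb]
  linarith [show b * (c - a) - a * (d - b) = c * b - a * d by ring]

theorem biobjective_weak_domination_general
    (n : ℕ) (P2 Q2 f1 f2 : (Fin n → ℝ) → ℝ) (hf2 : ∀ x, f2 x = P2 x / Q2 x)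
    (Xl : Set (Fin n → ℝ)) (hposQ2 : ∀ x ∈ Xl, 0 < Q2 x)
    (xstar : Fin n → ℝ) (hxs : xstar ∈ Xl)
    (hmax : ∀ x ∈ Xl, f1 x ≤ f1 xstar)
    (x : Fin n → ℝ) (hx : x ∈ Xl)
    (hγ : Q2 xstar * (P2 x - P2 xstar) - P2 xstar * (Q2 x - Q2 xstar) ≤ 0) :
    f2 x ≤ f2 xstar ∧ f1 x ≤ f1 xstar := by
  refine ⟨?_, hmax x hx⟩
  rw [hf2 x, hf2 xstar]
  exact div_le_div_of_cross_sub_nonpos (hposQ2 xstar hxs) (hposQ2 x hx) hγ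

/-- If `x*` maximizes `f₁` over `X_l` and for `x ∈ X_l` the
reduced-gradient quantity `γ² = Q²(x*)(P²(x)-P²(x*)) - P²(x*)(Q²(x)-Q²(x*))`
is `≤ 0`, then `f₂(x) ≤ f₂(x*)` and `f₁(x) ≤ f₁(x*)`, i.e. `x*` weakly
dominates `x` for `(f₁, f₂)`. -/
theorem biobjective_weak_domination
    (n : ℕ) (p1 p2 q1 q2 : Fin n → ℝ) (α1 α2 β1 β2 : ℝ)
    (P1 P2 Q1 Q2 f1 f2 : (Fin n → ℝ) → ℝ)
    (hP1 : ∀ x, P1 x = (∑ j, p1 j * x j) + α1)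
    (hP2 : ∀ x, P2 x = (∑ j, p2 j * x j) + α2)
    (hQ1 : ∀ x, Q1 x = (∑ j, q1 j * x j) + β1)
    (hQ2 : ∀ x, Q2 x = (∑ j, q2 j * x j) + β2)
    (hf1 : ∀ x, f1 x = P1 x / Q1 x) (hf2 : ∀ x, f2 x = P2 x / Q2 x)
    (Xl : Set (Fin n → ℝ))
    (hposQ1 : ∀ x ∈ Xl, 0 < Q1 x) (hposQ2 : ∀ x ∈ Xl, 0 < Q2 x)
    (xstar : Fin n → ℝ) (hxs : xstar ∈ Xl)
    (hmax : ∀ x ∈ Xl, f1 x ≤ f1 xstar)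
    (x : Fin n → ℝ) (hx : x ∈ Xl)
    (hγ : Q2 xstar * (P2 x - P2 xstar) - P2 xstar * (Q2 x - Q2 xstar) ≤ 0) :
    f2 x ≤ f2 xstar ∧ f1 x ≤ f1 xstar :=
  biobjective_weak_domination_general n P2 Q2 f1 f2 hf2 Xl hposQ2 xstar hxs hmax x hx hγ
end

section
/- The Charnes–Cooper transformation t = 1/(q·x + β), y = t·x maps the linear fractional program max (p·x + α)/(q·x + β) over {x : Ax ≤ b, x ≥ 0} with q·x + β > 0 bijectively onto the linear program max p·y + α·t subject to Ay - b·t ≤ 0, q·y + β·t = 1, y ≥ 0, t > 0, and the optimal values coincide. -/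
/-!
Both programs are homogenizations of the same data: the affine expression `p ⬝ᵥ x + α` becomes the
linear form `p ⬝ᵥ y + α * t` on pairs `(y, t)`, and on the ray `(t • x, t)` it equals
`t * (p ⬝ᵥ x + α)`. Scaling a feasible `x` by `t = (q ⬝ᵥ x + β)⁻¹ > 0` therefore keeps the
inequality constraints, normalizes the denominator to `1`, and turns the ratio into the
homogenized numerator; `(y, t) ↦ t⁻¹ • y` undoes the scaling.
-/

open Matrix Set

namespace CharnesCooper

variable {m n : Type*} [Fintype n]

section Algebraic

variable {R : Type*} [CommSemiring R]

def homogenization (p : n → R) (α : R) (yt : (n → R) × R) : R :=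
  p ⬝ᵥ yt.1 + α * yt.2

lemma homogenization_smul_mk (p x : n → R) (α t : R) :
    homogenization p α (t • x, t) = t * (p ⬝ᵥ x + α) := by
  simp only [homogenization, dotProduct_smul, smul_eq_mul]
  ring

end Algebraic

variable {𝕜 : Type*} [Field 𝕜]

def transform (q : n → 𝕜) (β : 𝕜) (x : n → 𝕜) : (n → 𝕜) × 𝕜 :=
  ((q ⬝ᵥ x + β)⁻¹ • x, (q ⬝ᵥ x + β)⁻¹)

lemma homogenization_transform (p q x : n → 𝕜) (α β : 𝕜) :
    homogenization p α (transform q β x) = (p ⬝ᵥ x + α) / (q ⬝ᵥ x + β) := by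
  rw [transform, homogenization_smul_mk, inv_mul_eq_div]

variable [LinearOrder 𝕜]

def fractionalFeasible (A : Matrix m n 𝕜) (b : m → 𝕜) : Set (n → 𝕜) :=
  {x | A *ᵥ x ≤ b ∧ 0 ≤ x}

def linearFeasible (A : Matrix m n 𝕜) (b : m → 𝕜) (q : n → 𝕜) (β : 𝕜) :
    Set ((n → 𝕜) × 𝕜) :=
  {yt | A *ᵥ yt.1 - yt.2 • b ≤ 0 ∧ homogenization q β yt = 1 ∧ 0 ≤ yt.1 ∧ 0 < yt.2}

variable {A : Matrix m n 𝕜} {b : m → 𝕜} {q : n → 𝕜} {β : 𝕜}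

lemma invOn_transform (hden : ∀ x ∈ fractionalFeasible A b, 0 < q ⬝ᵥ x + β) :
    InvOn (fun yt : (n → 𝕜) × 𝕜 ↦ yt.2⁻¹ • yt.1) (transform q β)
      (fractionalFeasible A b) (linearFeasible A b q β) := by
  constructor
  · intro x hx
    simp only [transform, inv_inv, smul_inv_smul₀ (hden x hx).ne']
  · rintro ⟨y, t⟩ ⟨-, hq, -, ht⟩
    dsimp only at ht
    have hden' : q ⬝ᵥ (t⁻¹ • y) + β = t⁻¹ := by
      rw [← smul_inv_smul₀ ht.ne' y, homogenization_smul_mk] at hq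
      exact eq_inv_of_mul_eq_one_right hq
    simp only [transform, hden', inv_inv, smul_inv_smul₀ ht.ne']

variable [IsStrictOrderedRing 𝕜]

lemma mulVec_smul_sub_smul_nonpos_iff {x : n → 𝕜} {t : 𝕜} (ht : 0 < t) :
    A *ᵥ (t • x) - t • b ≤ 0 ↔ A *ᵥ x ≤ b := by
  rw [sub_nonpos, mulVec_smul, smul_le_smul_iff_of_pos_left ht]

lemma mapsTo_transform (hden : ∀ x ∈ fractionalFeasible A b, 0 < q ⬝ᵥ x + β) :
    MapsTo (transform q β) (fractionalFeasible A b) (linearFeasible A b q β) := by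
  intro x hx
  have ht : 0 < (q ⬝ᵥ x + β)⁻¹ := inv_pos.mpr (hden x hx)
  refine ⟨(mulVec_smul_sub_smul_nonpos_iff ht).mpr hx.1, ?_,
    (smul_nonneg_iff_nonneg_of_pos_left ht).mpr hx.2, ht⟩
  rw [homogenization_transform q q x β β, div_self (hden x hx).ne']

lemma mapsTo_inv_smul :
    MapsTo (fun yt : (n → 𝕜) × 𝕜 ↦ yt.2⁻¹ • yt.1) (linearFeasible A b q β)
      (fractionalFeasible A b) := by
  rintro ⟨y, t⟩ ⟨hA, -, hy, ht⟩
  dsimp only at hA hy ht ⊢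
  rw [← smul_inv_smul₀ ht.ne' y] at hA hy
  exact ⟨(mulVec_smul_sub_smul_nonpos_iff ht).mp hA,
    (smul_nonneg_iff_nonneg_of_pos_left ht).mp hy⟩

lemma bijOn_transform (hden : ∀ x ∈ fractionalFeasible A b, 0 < q ⬝ᵥ x + β) :
    BijOn (transform q β) (fractionalFeasible A b) (linearFeasible A b q β) :=
  (invOn_transform hden).bijOn (mapsTo_transform hden) mapsTo_inv_smul

end CharnesCooper

open CharnesCooper in
theorem charnes_cooper_transformation_general
    (m n : ℕ) (A : Matrix (Fin m) (Fin n) ℝ) (b : Fin m → ℝ)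
    (p q : Fin n → ℝ) (α β : ℝ)
    (Sx : Set (Fin n → ℝ))
    (hSx : Sx = {x | A.mulVec x ≤ b ∧ 0 ≤ x})
    (hden : ∀ x ∈ Sx, 0 < (∑ j, q j * x j) + β)
    (f : (Fin n → ℝ) → ℝ)
    (hf : ∀ x, f x = ((∑ j, p j * x j) + α) / ((∑ j, q j * x j) + β))
    (Sy : Set ((Fin n → ℝ) × ℝ))
    (hSy : Sy = {yt | A.mulVec yt.1 - yt.2 • b ≤ 0 ∧
      (∑ j, q j * yt.1 j) + β * yt.2 = 1 ∧ 0 ≤ yt.1 ∧ 0 < yt.2})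
    (g : (Fin n → ℝ) × ℝ → ℝ)
    (hg : ∀ yt, g yt = (∑ j, p j * yt.1 j) + α * yt.2)
    (Φ : (Fin n → ℝ) → (Fin n → ℝ) × ℝ)
    (hΦ : ∀ x, Φ x = ((((∑ j, q j * x j) + β)⁻¹) • x,
      ((∑ j, q j * x j) + β)⁻¹)) :
    Set.BijOn Φ Sx Sy ∧ (∀ x ∈ Sx, g (Φ x) = f x) ∧
    sSup (f '' Sx) = sSup (g '' Sy) := by
  obtain rfl : Sx = fractionalFeasible A b := hSx
  obtain rfl : Sy = linearFeasible A b q β := hSy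
  obtain rfl : Φ = transform q β := funext hΦ
  obtain rfl : g = homogenization p α := funext hg
  have hbij : BijOn (transform q β) (fractionalFeasible A b) (linearFeasible A b q β) :=
    bijOn_transform hden
  have hgf : ∀ x ∈ fractionalFeasible A b, homogenization p α (transform q β x) = f x :=
    fun x _ ↦ by rw [hf, homogenization_transform p q x α β]; rfl
  refine ⟨hbij, hgf, ?_⟩
  rw [← hbij.image_eq, ← image_comp, ← image_congr hgf]
  rfl

/-- The Charnes–Cooper transformation `t = 1/(q·x+β)`, `y = t·x`
maps the feasible region of the linear fractional program bijectively onto the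
feasible region of the associated linear program, the objective values
correspond pointwise, and the optimal values coincide. -/
theorem charnes_cooper_transformation
    (m n : ℕ) (A : Matrix (Fin m) (Fin n) ℝ) (b : Fin m → ℝ)
    (p q : Fin n → ℝ) (α β : ℝ)
    (Sx : Set (Fin n → ℝ))
    (hSx : Sx = {x | A.mulVec x ≤ b ∧ 0 ≤ x})
    (hSxne : Sx.Nonempty)
    (hden : ∀ x ∈ Sx, 0 < (∑ j, q j * x j) + β)
    (f : (Fin n → ℝ) → ℝ)
    (hf : ∀ x, f x = ((∑ j, p j * x j) + α) / ((∑ j, q j * x j) + β))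
    (Sy : Set ((Fin n → ℝ) × ℝ))
    (hSy : Sy = {yt | A.mulVec yt.1 - yt.2 • b ≤ 0 ∧
      (∑ j, q j * yt.1 j) + β * yt.2 = 1 ∧ 0 ≤ yt.1 ∧ 0 < yt.2})
    (g : (Fin n → ℝ) × ℝ → ℝ)
    (hg : ∀ yt, g yt = (∑ j, p j * yt.1 j) + α * yt.2)
    (Φ : (Fin n → ℝ) → (Fin n → ℝ) × ℝ)
    (hΦ : ∀ x, Φ x = ((((∑ j, q j * x j) + β)⁻¹) • x,
      ((∑ j, q j * x j) + β)⁻¹)) :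
    Set.BijOn Φ Sx Sy ∧ (∀ x ∈ Sx, g (Φ x) = f x) ∧
    sSup (f '' Sx) = sSup (g '' Sy) :=
  charnes_cooper_transformation_general m n A b p q α β Sx hSx hden f hf Sy hSy g hg Φ hΦ
end
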